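/- Let f : ℝ^p → ℝ be the group-lasso-plus-lasso penalty f(θ) = λ₀‖θ‖₁ + ∑_m λ_m ‖θ^{(m)}‖₂ with all λ₀, λ_m > 0. Then the differentiable space of f at θ̂ equals span{eⱼ : θ̂ⱼ ≠ 0}: the two-sided directional derivative of f at θ̂ along u exists if and only if uⱼ = 0 for every j with θ̂ⱼ = 0. -/

import Mathlib

/-!
Along the line `t ↦ θ̂ + t • u` every summand of the penalty is a norm `‖a + t • b‖`, which is
differentiable at `t = 0` when `a ≠ 0` and equals `|t| * ‖b‖` when `a = 0`. Hence
`f (θ̂ + t • u) = G t + |t| * K` with `G` differentiable at `0` and `K ≥ 0` collecting `λ₀ |uⱼ|` over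
the zero coordinates and `λₘ ‖u⁽ᵐ⁾‖` over the zero groups of `θ̂`. The one-sided slopes at `0` are
`G'(0) ± K`, so the two-sided one exists iff `K = 0`, i.e. iff `u` vanishes on the zero coordinates
of `θ̂` (which contain the zero groups).
-/

open Filter Topology

def HasKinkAtZero (φ : ℝ → ℝ) (K : ℝ) : Prop :=
  ∃ G : ℝ → ℝ, DifferentiableAt ℝ G 0 ∧ ∀ t, φ t = G t + |t| * K

namespace HasKinkAtZero

variable {φ ψ : ℝ → ℝ} {K L : ℝ}

theorem add (hφ : HasKinkAtZero φ K) (hψ : HasKinkAtZero ψ L) :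
    HasKinkAtZero (fun t => φ t + ψ t) (K + L) := by
  obtain ⟨G, hG, hφG⟩ := hφ
  obtain ⟨H, hH, hψH⟩ := hψ
  exact ⟨fun t => G t + H t, hG.add hH, fun t => by simp only [hφG, hψH]; ring⟩

theorem const_mul (hφ : HasKinkAtZero φ K) (c : ℝ) :
    HasKinkAtZero (fun t => c * φ t) (c * K) := by
  obtain ⟨G, hG, hφG⟩ := hφ
  exact ⟨fun t => c * G t, hG.const_mul c, fun t => by simp only [hφG]; ring⟩

theorem sum {ι : Type*} (s : Finset ι) {φ : ι → ℝ → ℝ} {K : ι → ℝ}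
    (hφ : ∀ i ∈ s, HasKinkAtZero (φ i) (K i)) :
    HasKinkAtZero (fun t => ∑ i ∈ s, φ i t) (∑ i ∈ s, K i) := by
  classical
  induction s using Finset.induction_on with
  | empty => exact ⟨0, differentiableAt_const 0, fun t => by simp⟩
  | insert i s hi ih =>
    simp only [Finset.sum_insert hi]
    exact (hφ i (s.mem_insert_self i)).add (ih fun j hj => hφ j (Finset.mem_insert_of_mem hj))

/-- Only the one-sided slopes `G'(0) ± K` exist, and they agree exactly when `K = 0`. -/
theorem exists_tendsto_slope_iff (hφ : HasKinkAtZero φ K) :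
    (∃ d, Tendsto (fun t => (φ t - φ 0) / t) (𝓝[≠] 0) (𝓝 d)) ↔ K = 0 := by
  obtain ⟨G, hG, hφG⟩ := hφ
  have hslope : Tendsto (fun t => (G t - G 0) / t) (𝓝[≠] 0) (𝓝 (deriv G 0)) := by
    simpa [slope_fun_def_field] using hasDerivAt_iff_tendsto_slope.mp hG.hasDerivAt
  have hquot : ∀ t, (φ t - φ 0) / t = (G t - G 0) / t + |t| / t * K := fun t => by
    rw [hφG, hφG 0, abs_zero]; ring
  simp only [hquot]
  constructor
  · rintro ⟨d, hd⟩
    have hright : Tendsto (fun t => (G t - G 0) / t + |t| / t * K) (𝓝[>] 0)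
        (𝓝 (deriv G 0 + K)) := by
      refine ((hslope.mono_left (nhdsGT_le_nhdsNE 0)).add_const K).congr' ?_
      filter_upwards [self_mem_nhdsWithin] with t (ht : 0 < t)
      rw [abs_of_pos ht, div_self ht.ne', one_mul]
    have hleft : Tendsto (fun t => (G t - G 0) / t + |t| / t * K) (𝓝[<] 0)
        (𝓝 (deriv G 0 - K)) := by
      refine ((hslope.mono_left (nhdsLT_le_nhdsNE 0)).sub_const K).congr' ?_
      filter_upwards [self_mem_nhdsWithin] with t (ht : t < 0)
      rw [abs_of_neg ht, neg_div, div_self ht.ne]; ring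
    have := (tendsto_nhds_unique (hd.mono_left (nhdsGT_le_nhdsNE 0)) hright).symm.trans
      (tendsto_nhds_unique (hd.mono_left (nhdsLT_le_nhdsNE 0)) hleft)
    linarith
  · rintro rfl
    exact ⟨deriv G 0, by simpa using hslope⟩

end HasKinkAtZero

theorem hasKinkAtZero_norm_add_smul {E : Type*} [NormedAddCommGroup E] [InnerProductSpace ℝ E]
    [DecidableEq E] (a b : E) :
    HasKinkAtZero (fun t : ℝ => ‖a + t • b‖) (if a = 0 then ‖b‖ else 0) := by
  split_ifs with ha
  · exact ⟨0, differentiableAt_const 0, fun t => by simp [ha, norm_smul]⟩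
  · refine ⟨fun t => ‖a + t • b‖, ?_, fun t => by ring⟩
    exact ((differentiableAt_const a).add (differentiableAt_id.smul_const b)).norm ℝ (by simpa)

section SparseGroupLasso

variable {ι κ : Type*} [DecidableEq κ]

noncomputable def sparseGroupLasso [Fintype ι] [Fintype κ] (g : ι → κ) (lam₀ : ℝ) (lam : κ → ℝ)
    (θ : ι → ℝ) : ℝ :=
  lam₀ * ∑ j, |θ j| + ∑ m, lam m * Real.sqrt (∑ j, if g j = m then (θ j) ^ 2 else 0)

/-- `θ⁽ᵐ⁾`, padded with zeros outside group `m`. -/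
def groupRestrict (g : ι → κ) (m : κ) (θ : ι → ℝ) : EuclideanSpace ℝ ι :=
  WithLp.toLp 2 fun j => if g j = m then θ j else 0

theorem groupRestrict_add_smul (g : ι → κ) (m : κ) (θ u : ι → ℝ) (t : ℝ) :
    groupRestrict g m (θ + t • u) = groupRestrict g m θ + t • groupRestrict g m u := by
  ext j
  simp only [groupRestrict, PiLp.add_apply, PiLp.smul_apply, Pi.add_apply, Pi.smul_apply,
    smul_eq_mul]
  split_ifs <;> ring

theorem norm_groupRestrict [Fintype ι] (g : ι → κ) (m : κ) (θ : ι → ℝ) :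
    ‖groupRestrict g m θ‖ = Real.sqrt (∑ j, if g j = m then (θ j) ^ 2 else 0) := by
  rw [EuclideanSpace.norm_eq]
  congr 1
  refine Finset.sum_congr rfl fun j _ => ?_
  simp only [groupRestrict, Real.norm_eq_abs, sq_abs]
  split_ifs <;> simp

theorem groupRestrict_eq_zero_iff (g : ι → κ) (m : κ) (θ : ι → ℝ) :
    groupRestrict g m θ = 0 ↔ ∀ j, g j = m → θ j = 0 := by
  simp only [groupRestrict, WithLp.toLp_eq_zero, funext_iff, Pi.zero_apply, ite_eq_right_iff]

open Classical in
noncomputable def sparseGroupLassoKink [Fintype ι] [Fintype κ] (g : ι → κ) (lam₀ : ℝ)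
    (lam : κ → ℝ) (θ u : ι → ℝ) : ℝ :=
  lam₀ * ∑ j, (if θ j = 0 then ‖u j‖ else 0) +
    ∑ m, lam m * (if groupRestrict g m θ = 0 then ‖groupRestrict g m u‖ else 0)

theorem hasKinkAtZero_sparseGroupLasso [Fintype ι] [Fintype κ] (g : ι → κ) (lam₀ : ℝ)
    (lam : κ → ℝ) (θ u : ι → ℝ) :
    HasKinkAtZero (fun t : ℝ => sparseGroupLasso g lam₀ lam (θ + t • u))
      (sparseGroupLassoKink g lam₀ lam θ u) := by
  have hline : (fun t : ℝ => sparseGroupLasso g lam₀ lam (θ + t • u)) = fun t =>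
      lam₀ * ∑ j, ‖θ j + t • u j‖ +
        ∑ m, lam m * ‖groupRestrict g m θ + t • groupRestrict g m u‖ := by
    funext t
    simp only [sparseGroupLasso, ← norm_groupRestrict, groupRestrict_add_smul, Real.norm_eq_abs]
    rfl
  rw [hline]
  exact ((HasKinkAtZero.sum _ fun j _ => hasKinkAtZero_norm_add_smul _ _).const_mul lam₀).add
    (HasKinkAtZero.sum _ fun m _ => (hasKinkAtZero_norm_add_smul _ _).const_mul (lam m))

theorem sparseGroupLassoKink_eq_zero_iff [Fintype ι] [Fintype κ] (g : ι → κ) {lam₀ : ℝ}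
    (hlam₀ : 0 < lam₀) {lam : κ → ℝ} (hlam : ∀ m, 0 ≤ lam m) (θ u : ι → ℝ) :
    sparseGroupLassoKink g lam₀ lam θ u = 0 ↔ ∀ j, θ j = 0 → u j = 0 := by
  have hgroups :
      0 ≤ ∑ m, lam m * (if groupRestrict g m θ = 0 then ‖groupRestrict g m u‖ else 0) :=
    Finset.sum_nonneg fun m _ => mul_nonneg (hlam m) (by positivity)
  constructor
  · intro hK j hj
    have hcoords : ∑ j, (if θ j = 0 then ‖u j‖ else 0) = 0 := by
      have := (add_eq_zero_iff_of_nonneg (by positivity) hgroups).mp hK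
      simpa [hlam₀.ne'] using this.1
    have := (Finset.sum_eq_zero_iff_of_nonneg (fun j _ => by positivity)).mp hcoords j
      (Finset.mem_univ j)
    simpa [hj] using this
  · intro hu
    have hgroup : ∀ m, groupRestrict g m θ = 0 → groupRestrict g m u = 0 := by
      simp only [groupRestrict_eq_zero_iff]
      exact fun m hθ j hj => hu j (hθ j hj)
    simp +contextual [sparseGroupLassoKink, hu, hgroup]

end SparseGroupLasso

/-- For the group-lasso-plus-lasso penalty
`f(θ) = λ₀‖θ‖₁ + ∑ₘ λₘ‖θ⁽ᵐ⁾‖₂` with all `λ₀, λₘ > 0`, the differentiable space at `θ̂` is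
`span{eⱼ : θ̂ⱼ ≠ 0}`: the two-sided directional derivative of `f` at `θ̂` along `u` exists if
and only if `uⱼ = 0` for every `j` with `θ̂ⱼ = 0`. -/
theorem sparse_group_lasso_differentiable_space {p M : ℕ}
    (g : Fin p → Fin M)  -- group assignment
    (lam₀ : ℝ) (hlam₀ : 0 < lam₀)
    (lam : Fin M → ℝ) (hlam : ∀ m, 0 < lam m)
    (f : (Fin p → ℝ) → ℝ)
    (hf : ∀ θ : Fin p → ℝ,
      f θ = lam₀ * ∑ j, |θ j|
        + ∑ m, lam m * Real.sqrt (∑ j, if g j = m then (θ j) ^ 2 else 0))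
    (θhat : Fin p → ℝ) :
    ∀ u : Fin p → ℝ,
      (∃ d : ℝ, Tendsto (fun t : ℝ => (f (θhat + t • u) - f θhat) / t)
          (nhdsWithin 0 {0}ᶜ) (nhds d))
        ↔ ∀ j, θhat j = 0 → u j = 0 := by
  obtain rfl : f = sparseGroupLasso g lam₀ lam := funext hf
  intro u
  have hslope := (hasKinkAtZero_sparseGroupLasso g lam₀ lam θhat u).exists_tendsto_slope_iff
  simp only [zero_smul, add_zero] at hslope
  rw [hslope, sparseGroupLassoKink_eq_zero_iff g hlam₀ (fun m => (hlam m).le)]
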